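/- arXiv:1305.5344 — 2 statements merged into one kernel-verified Lean document; each statement's English description precedes it below -/
import Mathlib

section
/- Let A be an mth order n-dimensional completely positive tensor with m odd, m ≥ 2. If λ < 0 is a Z-eigenvalue of A with Z-eigenvector x (i.e., A x^{m-1} = λ x and xᵀx = 1), then x is nonpositive, i.e., x_i ≤ 0 for all i. -/
noncomputable section
open Classical Finset

/-- An `m`th order `n`-dimensional real tensor is completely positive if its entries are
given by a sum of entrywise products of finitely many (at least one) nonnegative vectors. -/
def IsCPTensor (m n : ℕ) (A : (Fin m → Fin n) → ℝ) : Prop :=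
  ∃ r : ℕ, 0 < r ∧ ∃ u : Fin r → Fin n → ℝ,
    (∀ k i, 0 ≤ u k i) ∧ ∀ f : Fin m → Fin n, A f = ∑ k, ∏ j, u k (f j)

/-- The `i`-th component of `A x^{m-1}`:
`(A x^{m-1})_i = Σ_{i_2,…,i_m} a_{i i_2⋯i_m} x_{i_2}⋯x_{i_m}`. -/
def contract (m n : ℕ) (hm : 0 < m) (A : (Fin m → Fin n) → ℝ) (x : Fin n → ℝ)
    (i : Fin n) : ℝ :=
  ∑ g : Fin m → Fin n,
    if g ⟨0, hm⟩ = i then A g * ∏ j ∈ Finset.univ.erase (⟨0, hm⟩ : Fin m), x (g j) else 0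

/-! A completely positive tensor is a sum of rank-one tensors `u^{⊗m}` with `u ≥ 0`, and
`u^{⊗m} x^{m-1} = (uᵀx)^{m-1} u`. For odd `m` the exponent `m - 1` is even, so `A x^{m-1}` is
entrywise nonnegative; `λ x = A x^{m-1}` with `λ < 0` then forces `x ≤ 0`. -/

theorem contract_sum {m n : ℕ} (hm : 0 < m) {ι : Type*} (s : Finset ι)
    (B : ι → (Fin m → Fin n) → ℝ) (x : Fin n → ℝ) (i : Fin n) :
    contract m n hm (fun g => ∑ k ∈ s, B k g) x i = ∑ k ∈ s, contract m n hm (B k) x i := by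
  unfold contract
  rw [Finset.sum_comm]
  refine Finset.sum_congr rfl fun g _ => ?_
  split_ifs <;> simp [Finset.sum_mul]

theorem contract_rankOne {m n : ℕ} (hm : 0 < m) (v x : Fin n → ℝ) (i : Fin n) :
    contract m n hm (fun g => ∏ j, v (g j)) x i = v i * (∑ t, v t * x t) ^ (m - 1) := by
  set e : Fin m := ⟨0, hm⟩
  -- the constraint `g e = i` becomes the factor at `e` of a product over all of `Fin m`
  let φ : Fin m → Fin n → ℝ := fun j t =>
    if j = e then (if t = i then v t else 0) else v t * x t
  have hφ : ∀ g : Fin m → Fin n,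
      (if g e = i then (∏ j, v (g j)) * ∏ j ∈ univ.erase e, x (g j) else 0) = ∏ j, φ j (g j) := by
    intro g
    have hrest : ∏ j ∈ univ.erase e, φ j (g j) = ∏ j ∈ univ.erase e, v (g j) * x (g j) :=
      Finset.prod_congr rfl fun j hj => if_neg (Finset.ne_of_mem_erase hj)
    rw [← Finset.mul_prod_erase univ (fun j => φ j (g j)) (mem_univ e), hrest,
      Finset.prod_mul_distrib, ← Finset.mul_prod_erase univ (fun j => v (g j)) (mem_univ e)]
    by_cases hg : g e = i <;> simp [φ, hg, mul_assoc]
  have hφ_rest : ∀ j ∈ univ.erase e, ∑ t, φ j t = ∑ t, v t * x t :=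
    fun j hj => Finset.sum_congr rfl fun t _ => if_neg (Finset.ne_of_mem_erase hj)
  calc contract m n hm (fun g => ∏ j, v (g j)) x i
      = ∏ j, ∑ t, φ j t := by
        rw [Fintype.prod_sum]
        exact Finset.sum_congr rfl fun g _ => hφ g
    _ = (∑ t, φ e t) * ∏ j ∈ univ.erase e, ∑ t, v t * x t := by
        rw [← Finset.mul_prod_erase univ _ (mem_univ e), Finset.prod_congr rfl hφ_rest]
    _ = v i * (∑ t, v t * x t) ^ (m - 1) := by
        simp [φ, Finset.card_erase_of_mem]

theorem IsCPTensor.contract_nonneg {m n : ℕ} (hm : 0 < m) (hodd : Odd m)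
    {A : (Fin m → Fin n) → ℝ} (hA : IsCPTensor m n A) (x : Fin n → ℝ) (i : Fin n) :
    0 ≤ contract m n hm A x i := by
  obtain ⟨r, -, u, hu, hAu⟩ := hA
  obtain rfl : A = fun g => ∑ k, ∏ j, u k (g j) := funext hAu
  rw [contract_sum]
  have heven : Even (m - 1) := Nat.Odd.sub_odd hodd odd_one
  refine Finset.sum_nonneg fun k _ => ?_
  rw [contract_rankOne]
  exact mul_nonneg (hu k i) (heven.pow_nonneg _)

/-- For a completely positive tensor of odd order m ≥ 2, a Z-eigenvector associated with a
negative Z-eigenvalue is entrywise nonpositive. -/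
theorem cp_tensor_Z_eigenvector_nonpos_odd (m n : ℕ) (hm : 2 ≤ m) (hodd : Odd m)
    (A : (Fin m → Fin n) → ℝ) (hA : IsCPTensor m n A)
    (lam : ℝ) (hlam : lam < 0) (x : Fin n → ℝ)
    (heig : ∀ i : Fin n, contract m n (by omega) A x i = lam * x i) :
    ∀ i : Fin n, x i ≤ 0 := by
  intro i
  have hnonneg : 0 ≤ lam * x i := heig i ▸ hA.contract_nonneg _ hodd x i
  exact nonpos_of_mul_nonneg_right hnonneg hlam
end
end

section
/- Let A = (a_{i_1⋯i_m}) be an mth order n-dimensional strongly symmetric, hierarchically dominated nonnegative tensor. Then A admits a completely positive decomposition A = Σ_{k=1}^r (u^{(k)})^m with nonnegative vectors u^{(k)} ∈ ℝ^n where the number of terms satisfies r ≤ Σ_{k=0}^{m−1} C(n, m−k) = Σ_{l=1}^{m} C(n, l); in particular the CP rank of A (the minimum such r) is at most Σ_{k=0}^{m−1} C(n, m−k). -/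
noncomputable section
open Classical Finset

/-- A tensor is strongly symmetric if two entries coincide whenever their index tuples
have the same set of distinct indices. -/
def StronglySymmetric (m n : ℕ) (A : (Fin m → Fin n) → ℝ) : Prop :=
  ∀ f g : Fin m → Fin n, Set.range f = Set.range g → A f = A g

/-- The index tuple of length m consisting of (i_1, …, i_p) followed by m − p repetitions
of i_p. -/
def pad (p m n : ℕ) (hp : 0 < p) (i : Fin p → Fin n) : Fin m → Fin n :=
  fun q => if h : (q : ℕ) < p then i ⟨q, h⟩ else i ⟨p - 1, Nat.sub_lt hp Nat.one_pos⟩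

/-- A strongly symmetric nonnegative tensor is hierarchically dominated if for every
1 ≤ p ≤ m − 1 and every increasing tuple i_1 < ⋯ < i_p, the entry a_{i_1⋯i_p i_p⋯i_p}
dominates the sum of the entries a_{j_1⋯j_{p+1} j_{p+1}⋯j_{p+1}} over all increasing
tuples j_1 < ⋯ < j_{p+1} whose index set contains {i_1, …, i_p}. -/
def HierDominated (m n : ℕ) (A : (Fin m → Fin n) → ℝ) : Prop :=
  ∀ (p : ℕ) (hp : 0 < p), p ≤ m - 1 → ∀ i : Fin p → Fin n, StrictMono i →
    (∑ j ∈ Finset.univ.filter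
        (fun j : Fin (p + 1) → Fin n => StrictMono j ∧ Set.range i ⊆ Set.range j),
      A (pad (p + 1) m n (Nat.succ_pos p) j)) ≤ A (pad p m n hp i)

/-!
View `A` as the set function `a T := A f` for any index tuple `f` whose set of indices is `T`,
and invert `a T = ∑_{S ⊇ T, |S| ≤ m} c S` downwards (truncated Möbius inversion). By downward
induction every `c S` with `S` nonempty is nonnegative: each proper superset `U` of `S` contains
a one-point extension `T` of `S`, so `∑_{U ⊋ S} c U ≤ ∑_T ∑_{U ⊇ T} c U = ∑_T a T ≤ a S`, the last
step being hierarchical domination. Hence `A = ∑_S (c S ^ (1/m) • 𝟙_S)^m`, with one term for each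
nonempty `S` of size at most `m`.
-/

namespace Finset

variable {ι : Type*} [Fintype ι] [DecidableEq ι]

def truncMobius (m : ℕ) (a : Finset ι → ℝ) (S : Finset ι) : ℝ :=
  a S - ∑ T ∈ ({T | S ⊂ T ∧ #T ≤ m} : Finset (Finset ι)).attach, truncMobius m a T
termination_by Fintype.card ι - #S
decreasing_by
  have h := (mem_filter.1 T.2).2.1
  have := card_lt_card h
  have := card_le_univ T.1
  omega

lemma truncMobius_eq (m : ℕ) (a : Finset ι → ℝ) (S : Finset ι) :
    truncMobius m a S = a S - ∑ T with S ⊂ T ∧ #T ≤ m, truncMobius m a T := by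
  rw [truncMobius, sum_attach]

lemma sum_truncMobius {m : ℕ} (a : Finset ι → ℝ) {T : Finset ι} (hT : #T ≤ m) :
    ∑ S with T ⊆ S ∧ #S ≤ m, truncMobius m a S = a T := by
  have hsplit : ({S | T ⊆ S ∧ #S ≤ m} : Finset (Finset ι)) =
      insert T ({S | T ⊂ S ∧ #S ≤ m} : Finset (Finset ι)) := by
    ext S
    simp only [mem_insert, mem_filter, mem_univ, true_and, ssubset_iff_subset_ne]
    constructor
    · rintro ⟨hTS, hS⟩
      by_cases h : T = S
      · exact .inl h.symm
      · exact .inr ⟨⟨hTS, h⟩, hS⟩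
    · rintro (rfl | ⟨⟨hTS, -⟩, hS⟩)
      exacts [⟨subset_rfl, hT⟩, ⟨hTS, hS⟩]
  rw [hsplit, sum_insert (by simp), truncMobius_eq, sub_add_cancel]

lemma truncMobius_nonneg {m : ℕ} {a : Finset ι → ℝ} (ha : ∀ S, 0 ≤ a S)
    (hdom : ∀ S : Finset ι, S.Nonempty → #S < m →
      ∑ T with S ⊆ T ∧ #T = #S + 1, a T ≤ a S)
    {S : Finset ι} (hS : S.Nonempty) (hSm : #S ≤ m) : 0 ≤ truncMobius m a S := by
  refine strongDownwardInduction (p := fun S ↦ S.Nonempty → 0 ≤ truncMobius m a S)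
    (fun S ih hSm hS ↦ ?_) S hSm hS
  have hsup {U : Finset ι} (hSU : S ⊂ U) (hU : #U ≤ m) : 0 ≤ truncMobius m a U :=
    ih hU hSU (hS.mono hSU.subset)
  rw [truncMobius_eq, sub_nonneg]
  rcases hSm.lt_or_eq with hlt | rfl
  · calc ∑ U with S ⊂ U ∧ #U ≤ m, truncMobius m a U
        ≤ ∑ U with S ⊂ U ∧ #U ≤ m,
            ∑ T with S ⊆ T ∧ #T = #S + 1 ∧ T ⊆ U, truncMobius m a U := by
          refine sum_le_sum fun U hU ↦ ?_
          obtain ⟨hSU, hU⟩ := (mem_filter.1 hU).2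
          obtain ⟨x, hxU, hxS⟩ := exists_of_ssubset hSU
          refine single_le_sum (f := fun _ ↦ truncMobius m a U) (fun _ _ ↦ hsup hSU hU)
            (a := insert x S) ?_
          simp [card_insert_of_notMem hxS, insert_subset hxU hSU.subset]
      _ = ∑ T with S ⊆ T ∧ #T = #S + 1, ∑ U with T ⊆ U ∧ #U ≤ m, truncMobius m a U := by
          refine sum_comm' fun U T ↦ ?_
          simp only [mem_filter, mem_univ, true_and]
          constructor
          · rintro ⟨⟨-, hU⟩, hST, hT, hTU⟩
            exact ⟨⟨hTU, hU⟩, hST, hT⟩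
          · rintro ⟨⟨hTU, hU⟩, hST, hT⟩
            refine ⟨⟨ssubset_of_ssubset_of_subset ?_ hTU, hU⟩, hST, hT, hTU⟩
            exact ssubset_iff_subset_ne.2 ⟨hST, by rintro rfl; omega⟩
      _ = ∑ T with S ⊆ T ∧ #T = #S + 1, a T :=
          sum_congr rfl fun T hT ↦ sum_truncMobius a (by grind)
      _ ≤ a S := hdom S hS hlt
  · have hempty : ({U | S ⊂ U ∧ #U ≤ #S} : Finset (Finset ι)) = ∅ :=
      filter_eq_empty_iff.2 fun U _ h ↦ (card_lt_card h.1).not_ge h.2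
    rw [hempty, sum_empty]
    exact ha S

lemma sum_strictMono_image {α β : Type*} [LinearOrder α] [Fintype α] [AddCommMonoid β]
    (k : ℕ) (P : Finset α → Prop) [DecidablePred P] (g : Finset α → β) :
    ∑ j : Fin k → α with StrictMono j ∧ P (univ.image j), g (univ.image j) =
      ∑ T with P T ∧ #T = k, g T := by
  refine sum_bij' (fun j _ ↦ univ.image j) (fun T hT ↦ T.orderEmbOfFin (mem_filter.1 hT).2.2)
    (fun j hj ↦ ?_) (fun T hT ↦ ?_) (fun j hj ↦ ?_) (fun T hT ↦ ?_) (fun _ _ ↦ rfl)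
  · obtain ⟨hj, hP⟩ := (mem_filter.1 hj).2
    simp [hP, card_image_of_injective _ hj.injective]
  · simp [(mem_filter.1 hT).2.1, (T.orderEmbOfFin _).strictMono, image_orderEmbOfFin_univ]
  · exact (orderEmbOfFin_unique _ (fun x ↦ mem_image_of_mem j (mem_univ x))
      (mem_filter.1 hj).2.1).symm
  · exact image_orderEmbOfFin_univ _ _

lemma card_filter_nonempty_card_le_eq_sum_choose (ι : Type*) [Fintype ι] (m : ℕ) :
    #({S | S.Nonempty ∧ #S ≤ m} : Finset (Finset ι)) =
      ∑ l ∈ Icc 1 m, (Fintype.card ι).choose l := by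
  rw [card_eq_sum_card_fiberwise (f := card) (t := Icc 1 m)]
  · refine sum_congr rfl fun l hl ↦ ?_
    rw [← card_univ, ← card_powersetCard]
    congr 1
    ext S
    simp only [mem_filter, mem_univ, true_and, mem_powersetCard, subset_univ, ← card_pos]
    grind
  · intro S hS
    obtain ⟨hne, hSm⟩ := (mem_filter.1 hS).2
    exact mem_Icc.2 ⟨hne.card_pos, hSm⟩

lemma prod_ite_mem_rpow_inv {ι : Type*} [DecidableEq ι] {m : ℕ} (hm : m ≠ 0) {x : ℝ}
    (hx : 0 ≤ x) (S : Finset ι) (f : Fin m → ι) :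
    ∏ j, (if f j ∈ S then x ^ (m⁻¹ : ℝ) else 0) = if univ.image f ⊆ S then x else 0 := by
  rw [prod_ite_zero, prod_const, card_univ, Fintype.card_fin, Real.rpow_inv_natCast_pow hx hm]
  simp [image_subset_iff]

end Finset

lemma range_pad {p m n : ℕ} (hp : 0 < p) (hpm : p ≤ m) (i : Fin p → Fin n) :
    Set.range (pad p m n hp i) = Set.range i := by
  refine (Set.range_subset_iff.2 fun q ↦ ?_).antisymm (Set.range_subset_iff.2 fun k ↦ ?_)
  · unfold pad
    split <;> exact Set.mem_range_self _
  · exact ⟨⟨k, k.2.trans_le hpm⟩, by simp [pad]⟩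

section Tensor

variable {m n : ℕ} {A : (Fin m → Fin n) → ℝ}

def setEntry (A : (Fin m → Fin n) → ℝ) (T : Finset (Fin n)) : ℝ :=
  if h : ∃ f : Fin m → Fin n, Set.range f = T then A h.choose else 0

lemma setEntry_nonneg (hnn : ∀ f, 0 ≤ A f) (T : Finset (Fin n)) : 0 ≤ setEntry A T := by
  unfold setEntry
  split
  exacts [hnn _, le_rfl]

lemma StronglySymmetric.setEntry_eq (hss : StronglySymmetric m n A) {T : Finset (Fin n)}
    {f : Fin m → Fin n} (hf : Set.range f = T) : setEntry A T = A f := by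
  have h : ∃ f : Fin m → Fin n, Set.range f = T := ⟨f, hf⟩
  rw [setEntry, dif_pos h]
  exact hss _ _ (h.choose_spec.trans hf.symm)

lemma StronglySymmetric.setEntry_image (hss : StronglySymmetric m n A) (f : Fin m → Fin n) :
    setEntry A (univ.image f) = A f :=
  hss.setEntry_eq (by simp)

lemma StronglySymmetric.apply_pad (hss : StronglySymmetric m n A) {p : ℕ} (hp : 0 < p)
    (hpm : p ≤ m) (i : Fin p → Fin n) : A (pad p m n hp i) = setEntry A (univ.image i) :=
  (hss.setEntry_eq (by simp [range_pad hp hpm])).symm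

lemma HierDominated.sum_setEntry_le (hhd : HierDominated m n A) (hss : StronglySymmetric m n A)
    {S : Finset (Fin n)} (hS : S.Nonempty) (hSm : #S < m) :
    ∑ T with S ⊆ T ∧ #T = #S + 1, setEntry A T ≤ setEntry A S := by
  set i := S.orderEmbOfFin rfl
  calc ∑ T with S ⊆ T ∧ #T = #S + 1, setEntry A T
      = ∑ j : Fin (#S + 1) → Fin n with StrictMono j ∧ S ⊆ univ.image j,
          setEntry A (univ.image j) := (sum_strictMono_image _ _ _).symm
    _ = ∑ j : Fin (#S + 1) → Fin n with StrictMono j ∧ Set.range i ⊆ Set.range j,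
          A (pad (#S + 1) m n (Nat.succ_pos _) j) := by
        refine sum_congr (filter_congr fun j _ ↦ ?_) fun j _ ↦ (hss.apply_pad _ hSm _).symm
        simp [i, range_orderEmbOfFin, ← coe_subset]
    _ ≤ A (pad #S m n hS.card_pos i) := hhd _ _ (by omega) _ i.strictMono
    _ = setEntry A S := by rw [hss.apply_pad _ hSm.le, image_orderEmbOfFin_univ]

end Tensor

/-- A strongly symmetric, hierarchically dominated nonnegative tensor admits a completely
positive decomposition A = Σ_{k=1}^r (u^{(k)})^m with nonnegative vectors u^{(k)} and with
r ≤ Σ_{l=1}^{m} C(n, l) (= Σ_{k=0}^{m-1} C(n, m-k)); in particular its CP rank is at most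
this bound. -/
theorem hier_dominated_cprank_bound (m n : ℕ) (hm : 1 ≤ m)
    (A : (Fin m → Fin n) → ℝ)
    (hss : StronglySymmetric m n A) (hnn : ∀ f, 0 ≤ A f) (hhd : HierDominated m n A) :
    ∃ (r : ℕ) (u : Fin r → Fin n → ℝ),
      (∀ k i, 0 ≤ u k i) ∧
      (∀ f : Fin m → Fin n, A f = ∑ k, ∏ j, u k (f j)) ∧
      r ≤ ∑ l ∈ Finset.Icc 1 m, n.choose l := by
  set c := truncMobius m (setEntry A)
  set 𝒮 : Finset (Finset (Fin n)) := {S | S.Nonempty ∧ #S ≤ m}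
  have hc {S : Finset (Fin n)} (hS : S ∈ 𝒮) : 0 ≤ c S := by
    obtain ⟨hne, hSm⟩ := (mem_filter.1 hS).2
    exact truncMobius_nonneg (setEntry_nonneg hnn) (fun _ ↦ hhd.sum_setEntry_le hss) hne hSm
  let v (S : Finset (Fin n)) (i : Fin n) : ℝ := if i ∈ S then c S ^ (m⁻¹ : ℝ) else 0
  refine ⟨#𝒮, fun k ↦ v (𝒮.equivFin.symm k), fun k i ↦ ?_, fun f ↦ ?_, ?_⟩
  · dsimp only [v]
    split
    exacts [Real.rpow_nonneg (hc (𝒮.equivFin.symm k).2) _, le_rfl]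
  · have himage : (univ.image f).Nonempty := univ_nonempty_iff.2 ⟨⟨0, hm⟩⟩ |>.image f
    calc A f = setEntry A (univ.image f) := (hss.setEntry_image f).symm
      _ = ∑ S with univ.image f ⊆ S ∧ #S ≤ m, c S :=
          (sum_truncMobius _ (card_image_le.trans (by simp))).symm
      _ = ∑ S ∈ 𝒮, if univ.image f ⊆ S then c S else 0 := by
          rw [← sum_filter, filter_filter]
          exact sum_congr (filter_congr fun S _ ↦ ⟨fun h ↦ ⟨⟨himage.mono h.1, h.2⟩, h.1⟩,
            fun h ↦ ⟨h.2, h.1.2⟩⟩) fun _ _ ↦ rfl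
      _ = ∑ S ∈ 𝒮, ∏ j, v S (f j) :=
          sum_congr rfl fun S hS ↦ (prod_ite_mem_rpow_inv (by omega) (hc hS) S f).symm
      _ = ∑ k, ∏ j, v (𝒮.equivFin.symm k) (f j) := by
          rw [← sum_coe_sort]
          exact (Equiv.sum_comp _ _).symm
  · simpa using (card_filter_nonempty_card_le_eq_sum_choose (Fin n) m).le
end
end
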